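/- Let A be a K-algebra over a field K of characteristic zero with elements x, y satisfying x*y − y*x = x, and define w_k = x*y^k − y^k*x. Then for every k ≥ 1: y * w_k = (k/(k+1)) · w_{k+1} − (1/(k+1)) · ∑_{i=1}^{k} C(k+1,i) · B_{k+1−i} · w_i. -/

import Mathlib

/-!
From `x * y - y * x = x` we get `x * y ^ n = (1 + y) ^ n * x`, so `w n = ((1 + y) ^ n - y ^ n) * x`
and the claim is the image under `p ↦ p(y) * x` of an identity in `K[X]`. Since
`∑ i ≤ n, C(n, i) B'_{n-i} t ^ i = B_n(1 + t)` for the Bernoulli polynomial `B_n`, the relation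
`B_n(1 + t) - B_n(t) = n t ^ (n - 1)` gives
`∑ i ≤ k + 1, C(k + 1, i) B'_{k+1-i} ((1 + t) ^ i - t ^ i) = (k + 1) (1 + t) ^ k`,
and the identity follows by splitting off the terms `i = 0` and `i = k + 1`.
-/

open Polynomial Finset

namespace Polynomial

theorem bernoulli_comp_one_add_X_eq_sum (n : ℕ) :
    (bernoulli n).comp (1 + X) =
      ∑ i ∈ range (n + 1), ((n.choose i : ℚ) * bernoulli' (n - i)) • X ^ i := by
  have hreflect : (bernoulli n).comp (1 + X) = C ((-1) ^ n) * (bernoulli n).comp (-X) := by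
    simpa [comp_assoc, sub_eq_add_neg] using congr(($(bernoulli_comp_one_sub_X n)).comp (-X))
  rw [hreflect, bernoulli_def, Polynomial.sum_comp, mul_sum]
  refine sum_congr rfl fun i hi => ?_
  obtain ⟨j, rfl⟩ := Nat.exists_eq_add_of_le' (Nat.lt_succ_iff.mp (mem_range.mp hi))
  have hsign : (-1 : ℚ) ^ (j + i) * (-1) ^ i = (-1) ^ j := by
    rw [pow_add, mul_assoc, ← pow_add, ← two_mul, pow_mul, neg_one_sq, one_pow, mul_one]
  rw [monomial_comp, neg_pow (X : ℚ[X]), Nat.add_sub_cancel, bernoulli'_eq_bernoulli, ← hsign,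
    smul_eq_C_mul]
  simp only [map_mul, map_pow, map_neg, map_one, map_natCast]
  ring

theorem sum_choose_bernoulli'_smul_one_add_X_pow_sub_X_pow (n : ℕ) :
    ∑ i ∈ range (n + 1), ((n.choose i : ℚ) * bernoulli' (n - i)) • ((1 + X) ^ i - X ^ i) =
      n • (1 + X : ℚ[X]) ^ (n - 1) := by
  set p : ℚ[X] := ∑ i ∈ range (n + 1), ((n.choose i : ℚ) * bernoulli' (n - i)) • X ^ i
  have hp : p = Polynomial.bernoulli n + n • X ^ (n - 1) :=
    (bernoulli_comp_one_add_X_eq_sum n).symm.trans (bernoulli_comp_one_add_X n)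
  have hshift : p.comp (1 + X) = p + n • (1 + X) ^ (n - 1) := by
    rw [hp, add_comp, bernoulli_comp_one_add_X, smul_comp, X_pow_comp]
  calc _ = p.comp (1 + X) - p := by
        simp only [p, Polynomial.sum_comp, smul_comp, X_pow_comp, smul_sub, sum_sub_distrib]
    _ = n • (1 + X) ^ (n - 1) := by rw [hshift, add_sub_cancel_left]

theorem X_mul_one_add_X_pow_sub_X_pow {K : Type*} [Field K] [CharZero K] (k : ℕ) :
    (X : K[X]) * ((1 + X) ^ k - X ^ k) =
      ((k : K) / (k + 1)) • ((1 + X) ^ (k + 1) - X ^ (k + 1)) -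
      ((1 : K) / (k + 1)) • ∑ i ∈ Icc 1 k,
        (((k + 1).choose i : K) * algebraMap ℚ K (bernoulli' (k + 1 - i))) •
          ((1 + X) ^ i - X ^ i) := by
  have hsum : ∑ i ∈ Icc 1 k,
        (((k + 1).choose i : K) * algebraMap ℚ K (bernoulli' (k + 1 - i))) •
          ((1 + X : K[X]) ^ i - X ^ i) =
      ((k : K) + 1) • (1 + X) ^ k - ((1 + X) ^ (k + 1) - X ^ (k + 1)) := by
    have h := congr(Polynomial.map (algebraMap ℚ K)
      $(sum_choose_bernoulli'_smul_one_add_X_pow_sub_X_pow (k + 1)))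
    rw [range_eq_Ico, sum_Ico_succ_top (by omega), sum_eq_sum_Ico_succ_bot (by omega),
      Ico_add_one_right_eq_Icc] at h
    rw [eq_sub_iff_add_eq]
    simpa [Polynomial.map_sum, Polynomial.map_smul, nsmul_eq_mul, Algebra.smul_def] using h
  have hX : (X : K[X]) * ((1 + X) ^ k - X ^ k) =
      (1 + X) ^ (k + 1) - X ^ (k + 1) - (1 + X) ^ k := by
    ring
  rw [hX, hsum]
  match_scalars <;> field_simp <;> ring

end Polynomial

theorem mul_pow_eq_one_add_pow_mul {A : Type*} [Ring A] {x y : A} (h : x * y - y * x = x)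
    (n : ℕ) : x * y ^ n = (1 + y) ^ n * x := by
  have hxy : x * y = (1 + y) * x := by rw [add_mul, one_mul, ← sub_eq_iff_eq_add, h]
  induction n with
  | zero => simp
  | succ n ih => rw [pow_succ, ← mul_assoc, ih, mul_assoc, hxy, ← mul_assoc, ← pow_succ]

theorem y_mul_wk_general (K : Type*) (A : Type*) [Field K] [CharZero K] [Ring A] [Algebra K A]
    (x y : A) (h : x * y - y * x = x) (k : ℕ) :
    y * (x * y ^ k - y ^ k * x) =
      ((k : K) / (k + 1)) • (x * y ^ (k + 1) - y ^ (k + 1) * x) -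
      ((1 : K) / (k + 1)) • ∑ i ∈ Finset.Icc 1 k,
        (((k + 1).choose i : K) * algebraMap ℚ K (bernoulli' (k + 1 - i))) •
          (x * y ^ i - y ^ i * x) := by
  let φ : K[X] →ₗ[K] A := LinearMap.mulRight K x ∘ₗ (aeval y).toLinearMap
  have hφ : ∀ n : ℕ, φ ((1 + X) ^ n - X ^ n) = x * y ^ n - y ^ n * x := by
    intro n
    simp [φ, mul_pow_eq_one_add_pow_mul h, sub_mul]
  have hφX : ∀ p, φ (X * p) = y * φ p := by
    intro p
    simp [φ, mul_assoc]
  simpa only [hφX, map_sub, map_smul, map_sum, hφ] using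
    congr(φ $(X_mul_one_add_X_pow_sub_X_pow (K := K) k))

theorem y_mul_wk (K : Type*) (A : Type*) [Field K] [CharZero K] [Ring A] [Algebra K A]
    (x y : A) (h : x * y - y * x = x) (k : ℕ) (hk : 1 ≤ k) :
    y * (x * y ^ k - y ^ k * x) =
      ((k : K) / (k + 1)) • (x * y ^ (k + 1) - y ^ (k + 1) * x) -
      ((1 : K) / (k + 1)) • ∑ i ∈ Finset.Icc 1 k,
        (((k + 1).choose i : K) * algebraMap ℚ K (bernoulli' (k + 1 - i))) •
          (x * y ^ i - y ^ i * x) :=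
  y_mul_wk_general K A x y h k
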